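/- Define R : ℝ → ℝ by R(x) = ((if x ≤ 1 then (x+1)² else x²) - 4)². Then the set of global minimum points of R is {-3, 1, 2}, each attaining the global minimum value 0. -/

import Mathlib

theorem setOf_forall_le_eq_setOf_eq_zero {α β : Type*} [PartialOrder β] [Zero β] {f : α → β}
    (hf : ∀ x, 0 ≤ f x) {a : α} (ha : f a = 0) :
    {x | ∀ y, f x ≤ f y} = {x | f x = 0} := by
  ext x
  constructor
  · intro hx
    exact le_antisymm (ha ▸ hx a) (hf x)
  · intro hx y
    exact hx.symm ▸ hf y

theorem sq_eq_four_iff {x : ℝ} : x ^ 2 = 4 ↔ x = 2 ∨ x = -2 := by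
  rw [show (4 : ℝ) = 2 ^ 2 by norm_num, sq_eq_sq_iff_eq_or_eq_neg]

/-- The representing function `R` of the second row of Table 1. -/
noncomputable def tableRowTwo (x : ℝ) : ℝ :=
  ((if x ≤ 1 then (x + 1) ^ 2 else x ^ 2) - 4) ^ 2

theorem tableRowTwo_nonneg (x : ℝ) : 0 ≤ tableRowTwo x := sq_nonneg _

theorem tableRowTwo_eq_zero_iff {x : ℝ} : tableRowTwo x = 0 ↔ x ∈ ({-3, 1, 2} : Set ℝ) := by
  simp only [tableRowTwo, Set.mem_insert_iff, Set.mem_singleton_iff, sq_eq_zero_iff, sub_eq_zero]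
  split_ifs with hx
  · rw [sq_eq_four_iff]
    constructor
    · rintro (h | h)
      · exact Or.inr (Or.inl (by linarith))
      · exact Or.inl (by linarith)
    · rintro (rfl | rfl | rfl) <;> norm_num at *
  · rw [sq_eq_four_iff]
    constructor
    · rintro (h | h)
      · exact Or.inr (Or.inr h)
      · linarith
    · rintro (rfl | rfl | rfl) <;> norm_num at *

theorem table_row2_minima :
    {x : ℝ | ∀ y : ℝ, ((if x ≤ 1 then (x+1)^2 else x^2) - 4)^2 ≤
        ((if y ≤ 1 then (y+1)^2 else y^2) - 4)^2} = ({-3, 1, 2} : Set ℝ) ∧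
    ∀ x ∈ ({-3, 1, 2} : Set ℝ),
      ((if x ≤ 1 then (x+1)^2 else x^2) - 4)^2 = 0 := by
  have hzero : ∀ x ∈ ({-3, 1, 2} : Set ℝ), tableRowTwo x = 0 :=
    fun _ hx => tableRowTwo_eq_zero_iff.2 hx
  refine ⟨?_, hzero⟩
  calc {x | ∀ y, tableRowTwo x ≤ tableRowTwo y}
      = {x | tableRowTwo x = 0} :=
        setOf_forall_le_eq_setOf_eq_zero tableRowTwo_nonneg (hzero 1 (by simp))
    _ = {-3, 1, 2} := Set.ext fun _ => tableRowTwo_eq_zero_iff
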